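/- Let A be an abelian category and n ≥ 1. The functor W_n(A) → Fun([n-1], A) sending a functor F to the chain F(0,n) → F(1,n) → ⋯ → F(n-1,n) (indexed by the linear order [n-1] = {0 < ⋯ < n-1}) is fully faithful, and its essential image consists exactly of those functors [n-1] → A all of whose arrows are epimorphisms. -/

import Mathlib

open CategoryTheory CategoryTheory.Limits

/-- The poset `Ar[n]` of pairs `(i,j)` with `0 ≤ i ≤ j ≤ n`, ordered componentwise. -/
abbrev ArPos (n : ℕ) := {p : Fin (n+1) × Fin (n+1) // p.1 ≤ p.2}

/-- The morphism of `Ar[n]` from `(i,j)` to `(i',j')` when `i ≤ i'` and `j ≤ j'`. -/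
def arLe {n : ℕ} {i j i' j' : Fin (n+1)} (hij : i ≤ j) (hi'j' : i' ≤ j')
    (h1 : i ≤ i') (h2 : j ≤ j') :
    (⟨(i, j), hij⟩ : ArPos n) ⟶ ⟨(i', j'), hi'j'⟩ :=
  homOfLE (Subtype.mk_le_mk.mpr (Prod.mk_le_mk.mpr ⟨h1, h2⟩))

/-- The condition defining `W_n(A)` inside `Fun(Ar[n], A)`: each `F(i,i)` is a zero
object, and for every pair `(i,j) ≤ (i',j')` in `Ar[n]` (with all four corners in
`Ar[n]`) the square with vertices `F(i,j), F(i,j'), F(i',j), F(i',j')` is both a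
pullback and a pushout. -/
def WCond {A : Type*} [Category A] (n : ℕ) (F : ArPos n ⥤ A) : Prop :=
  (∀ i : Fin (n+1), IsZero (F.obj ⟨(i, i), le_rfl⟩)) ∧
  (∀ (i i' j j' : Fin (n+1)) (h1 : i ≤ i') (h2 : i' ≤ j) (h3 : j ≤ j'),
    IsPullback
        (F.map (arLe (h1.trans h2) ((h1.trans h2).trans h3) le_rfl h3))
        (F.map (arLe (h1.trans h2) h2 h1 le_rfl))
        (F.map (arLe ((h1.trans h2).trans h3) (h2.trans h3) h1 le_rfl))
        (F.map (arLe h2 (h2.trans h3) le_rfl h3)) ∧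
    IsPushout
        (F.map (arLe (h1.trans h2) ((h1.trans h2).trans h3) le_rfl h3))
        (F.map (arLe (h1.trans h2) h2 h1 le_rfl))
        (F.map (arLe ((h1.trans h2).trans h3) (h2.trans h3) h1 le_rfl))
        (F.map (arLe h2 (h2.trans h3) le_rfl h3)))

/-- The category `W_n(A)` of diagrams arising in level `n` of Waldhausen's
`S`-construction of `A`. -/
abbrev W (A : Type*) [Category A] (n : ℕ) := ObjectProperty.FullSubcategory (WCond (A := A) n)

/-- The monotone inclusion `[n-1] → Ar[n]`, `t ↦ (t, n)`. -/
def botMono (n : ℕ) : Fin n →o ArPos n where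
  toFun t := ⟨((⟨t.val, by omega⟩ : Fin (n+1)), Fin.last n), Fin.le_last _⟩
  monotone' s t h :=
    Subtype.mk_le_mk.mpr (Prod.mk_le_mk.mpr ⟨Fin.mk_le_mk.mpr h, le_rfl⟩)

/-- The functor `W_n(A) → Fun([n-1], A)` sending `F` to the chain
`F(0,n) → F(1,n) → ⋯ → F(n-1,n)`. -/
def botRow (A : Type*) [Category A] (n : ℕ) : W A n ⥤ (Fin n ⥤ A) :=
  ObjectProperty.ι _ ⋙
    (Functor.whiskeringLeft (Fin n) (ArPos n) A).obj (botMono n).monotone.functor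

/-!
For `F ∈ W_n(A)` and `i ≤ j`, the square with corners `F(i,j), F(i,n), F(j,j) = 0, F(j,n)` is
bicartesian: so `F(i,j) → F(i,n)` is a kernel of `F(i,n) → F(j,n)`, and `F(i,n) → F(j,n)` is a
pushout of a map to `0`, hence an epimorphism. Thus a morphism `F ⟶ G` is determined by its
components on the bottom row `F(·,n)`, and every natural family of such components lifts
through these kernels: the functor is fully faithful, and the bottom row consists of
epimorphisms. Conversely, extend a chain of epimorphisms `D` by `0` at position `n` and put
`F(i,j) = ker (D i → D j)`. Pasting kernel squares shows that the defining squares are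
pullbacks; they are pushouts because, in an abelian category, a pullback square in which one of
the two maps into the terminal corner is an epimorphism is also a pushout square.
-/

namespace CategoryTheory.IsPullback

variable {C : Type*} [Category C] [Abelian C]

theorem isPushout_of_epi {X₁ X₂ X₃ X₄ : C} {fst : X₁ ⟶ X₂} {snd : X₁ ⟶ X₃}
    {f : X₂ ⟶ X₄} {g : X₃ ⟶ X₄} (h : IsPullback fst snd f g) [Epi f] :
    IsPushout fst snd f g := by
  -- `X₁ → X₂ ⊞ X₃ → X₄` is exact, and its second map is epi because `f` is.
  have hS : h.shortComplex.Exact := by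
    rw [ShortComplex.exact_iff_exact_up_to_refinements]
    intro T (x : T ⟶ X₂ ⊞ X₃) (hx : x ≫ biprod.desc f g = 0)
    obtain ⟨l, hl₁, hl₂⟩ := h.exists_lift (x ≫ biprod.fst) (-(x ≫ biprod.snd)) (by
      rw [biprod.desc_eq] at hx
      simpa [eq_neg_iff_add_eq_zero] using hx)
    refine ⟨T, 𝟙 T, inferInstance, l, ?_⟩
    show 𝟙 T ≫ x = l ≫ biprod.lift fst (-snd)
    ext <;> simp [hl₁, hl₂]
  have : Epi h.shortComplex.g := (epi_of_epi_fac (biprod.inl_desc f g) : Epi (biprod.desc f g))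
  exact .of_isColimit (h.isColimitEquivIsColimitCokernelCofork.symm hS.gIsCokernel)

end CategoryTheory.IsPullback

section KernelDiagram

variable {C : Type*} [Category C] [HasZeroMorphisms C]

theorem isPullback_kernel_lift_ι {X Y Z : C} (a : X ⟶ Y) (b : Y ⟶ Z) (c : X ⟶ Z)
    (hc : c = a ≫ b) [HasKernel b] [HasKernel c] :
    IsPullback (kernel.lift b (kernel.ι c ≫ a) (by simp [← hc])) (kernel.ι c)
      (kernel.ι b) a := by
  subst hc
  refine .of_isLimit (PullbackCone.IsLimit.mk (by simp)
    (fun s => kernel.lift _ s.snd (by simp [← s.condition_assoc])) (fun s => ?_) (fun s => ?_)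
    (fun s m h₁ h₂ => ?_))
  · ext; simp [s.condition]
  · simp
  · ext; simpa using h₂

variable {α : Type*} [Preorder α] [HasKernels C] (E : α ⥤ C)

noncomputable def kernelDiagram : {p : α × α // p.1 ≤ p.2} ⥤ C where
  obj p := kernel (E.map (homOfLE p.2))
  map {p q} f := kernel.lift _ (kernel.ι _ ≫ E.map (homOfLE (leOfHom f).1)) (by
    rw [Category.assoc, ← E.map_comp,
      show homOfLE (leOfHom f).1 ≫ homOfLE q.2 = homOfLE p.2 ≫ homOfLE (leOfHom f).2 from rfl,
      E.map_comp, kernel.condition_assoc, zero_comp])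
  map_id p := by ext; simp
  map_comp f g := by ext; simp [← E.map_comp]

theorem kernelDiagram_map_ι {p q : {p : α × α // p.1 ≤ p.2}} (f : p ⟶ q) :
    (kernelDiagram E).map f ≫ kernel.ι (E.map (homOfLE q.2)) =
      kernel.ι (E.map (homOfLE p.2)) ≫ E.map (homOfLE (leOfHom f).1) :=
  kernel.lift_ι _ _ _

theorem isZero_kernelDiagram_obj_diag (i : α) :
    IsZero ((kernelDiagram E).obj ⟨(i, i), le_rfl⟩) := by
  have : Mono (E.map (homOfLE (le_refl i))) := by
    simp only [homOfLE_refl, E.map_id]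
    infer_instance
  exact isZero_kernel_of_mono _

theorem isPullback_kernelDiagram_ι {p q : {p : α × α // p.1 ≤ p.2}} (f : p ⟶ q)
    (h : p.1.2 = q.1.2) :
    IsPullback (kernel.ι (E.map (homOfLE p.2))) ((kernelDiagram E).map f)
      (E.map (homOfLE (leOfHom f).1)) (kernel.ι (E.map (homOfLE q.2))) := by
  obtain ⟨⟨i, j⟩, hp⟩ := p
  obtain ⟨⟨i', j'⟩, hq⟩ := q
  obtain rfl : j = j' := h
  exact (isPullback_kernel_lift_ι _ _ _ (by rw [← E.map_comp]; rfl)).flip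

end KernelDiagram

section KernelDiagramAbelian

variable {A : Type*} [Category A] [Abelian A]

theorem epi_kernelDiagram_map {α : Type*} [Preorder α] (E : α ⥤ A)
    {p q : {p : α × α // p.1 ≤ p.2}} (f : p ⟶ q) (h : p.1.2 = q.1.2)
    [Epi (E.map (homOfLE (leOfHom f).1))] : Epi ((kernelDiagram E).map f) :=
  Abelian.epi_snd_of_isLimit _ _ (isPullback_kernelDiagram_ι E f h).isLimit

theorem wCond_kernelDiagram {n : ℕ} (E : Fin (n + 1) ⥤ A)
    (hE : ∀ (i j : Fin (n + 1)) (f : i ⟶ j), Epi (E.map f)) : WCond n (kernelDiagram E) := by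
  refine ⟨isZero_kernelDiagram_obj_diag E, fun i i' j j' h₁ h₂ h₃ => ?_⟩
  have hpb : IsPullback
      ((kernelDiagram E).map (arLe (h₁.trans h₂) ((h₁.trans h₂).trans h₃) le_rfl h₃))
      ((kernelDiagram E).map (arLe (h₁.trans h₂) h₂ h₁ le_rfl))
      ((kernelDiagram E).map (arLe ((h₁.trans h₂).trans h₃) (h₂.trans h₃) h₁ le_rfl))
      ((kernelDiagram E).map (arLe h₂ (h₂.trans h₃) le_rfl h₃)) := by
    refine .of_right ?_ ?_ (isPullback_kernelDiagram_ι E _ rfl)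
    · simp only [kernelDiagram_map_ι, homOfLE_refl, E.map_id, Category.comp_id]
      exact isPullback_kernelDiagram_ι E (arLe (h₁.trans h₂) h₂ h₁ le_rfl) rfl
    · simp only [← Functor.map_comp]
      rfl
  have :=
    epi_kernelDiagram_map E (arLe ((h₁.trans h₂).trans h₃) (h₂.trans h₃) h₁ le_rfl) rfl
  exact ⟨hpb, hpb.isPushout_of_epi⟩

end KernelDiagramAbelian

namespace ArPos

variable {n : ℕ}

abbrev bot (i : Fin (n + 1)) : ArPos n := ⟨(i, Fin.last n), Fin.le_last i⟩

abbrev botHom {i j : Fin (n + 1)} (h : i ≤ j) : bot i ⟶ bot j :=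
  arLe (Fin.le_last i) (Fin.le_last j) h le_rfl

abbrev toBot (p : ArPos n) : p ⟶ bot p.1.1 :=
  arLe p.2 (Fin.le_last _) le_rfl (Fin.le_last _)

variable (n) in
def botFunctor : Fin (n + 1) ⥤ ArPos n where
  obj := bot
  map f := botHom (leOfHom f)

end ArPos

namespace WCond

variable {A : Type*} [Category A] {n : ℕ} {F G : ArPos n ⥤ A}

theorem epi_map_botHom (hF : WCond n F) {i j : Fin (n + 1)} (h : i ≤ j) :
    Epi (F.map (ArPos.botHom h)) := by
  have := (hF.1 j).epi (F.map (arLe h le_rfl h le_rfl))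
  exact PushoutCocone.epi_inl_of_is_pushout_of_epi
    (hF.2 i j j _ h le_rfl (Fin.le_last j)).2.isColimit

theorem mono_map_toBot (hF : WCond n F) (p : ArPos n) : Mono (F.map (ArPos.toBot p)) := by
  have := (hF.1 p.1.2).mono (F.map (arLe le_rfl (Fin.le_last _) le_rfl (Fin.le_last p.1.2)))
  exact PullbackCone.mono_fst_of_is_pullback_of_mono
    (hF.2 p.1.1 p.1.2 p.1.2 _ p.2 le_rfl (Fin.le_last _)).1.isLimit

theorem natTrans_ext (hG : WCond n G) {α β : F ⟶ G}
    (h : ∀ i, α.app (ArPos.bot i) = β.app (ArPos.bot i)) : α = β := by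
  ext p
  have := hG.mono_map_toBot p
  rw [← cancel_mono (G.map (ArPos.toBot p)), ← α.naturality, ← β.naturality, h]

variable [HasZeroMorphisms A] (hF : WCond n F) (hG : WCond n G)
  (ψ : ∀ i, F.obj (ArPos.bot i) ⟶ G.obj (ArPos.bot i))
  (hψ : ∀ (i j : Fin (n + 1)) (h : i ≤ j),
    F.map (ArPos.botHom h) ≫ ψ j = ψ i ≫ G.map (ArPos.botHom h))

/-- Lift through the pullback square of `G` at `(i, j, j, n)`; the second leg is `0`, which is
compatible since `F(i,j) → F(j,n)` factors through `F(j,j) = 0`. -/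
noncomputable def liftApp (p : ArPos n) : F.obj p ⟶ G.obj p :=
  (hG.2 p.1.1 p.1.2 p.1.2 _ p.2 le_rfl (Fin.le_last _)).1.lift
    (F.map (ArPos.toBot p) ≫ ψ p.1.1) 0 (by
      rw [zero_comp, Category.assoc, ← hψ, ← Category.assoc, ← F.map_comp,
        show ArPos.toBot p ≫ _ =
          arLe p.2 le_rfl p.2 le_rfl ≫ ArPos.toBot ⟨(p.1.2, p.1.2), le_rfl⟩ from rfl,
        F.map_comp, (hF.1 p.1.2).eq_of_tgt (F.map _) 0, zero_comp, zero_comp])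

theorem liftApp_comp (p : ArPos n) :
    liftApp hF hG ψ hψ p ≫ G.map (ArPos.toBot p) = F.map (ArPos.toBot p) ≫ ψ p.1.1 :=
  IsPullback.lift_fst _ _ _ _

noncomputable def natTransOfBot : F ⟶ G where
  app := liftApp hF hG ψ hψ
  naturality p q f := by
    have := hG.mono_map_toBot q
    rw [← cancel_mono (G.map (ArPos.toBot q)), Category.assoc, liftApp_comp, Category.assoc,
      ← G.map_comp,
      show f ≫ ArPos.toBot q = ArPos.toBot p ≫ ArPos.botHom (leOfHom f).1 from rfl,
      G.map_comp, reassoc_of% liftApp_comp, ← hψ, ← F.map_comp_assoc, ← F.map_comp_assoc]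
    rfl

theorem natTransOfBot_app_bot (i : Fin (n + 1)) :
    (natTransOfBot hF hG ψ hψ).app (ArPos.bot i) = ψ i := by
  simpa [natTransOfBot, Subsingleton.elim _ (𝟙 (ArPos.bot i))] using
    liftApp_comp hF hG ψ hψ (ArPos.bot i)

end WCond

namespace Fin

section ExtendByZero

open ZeroObject

variable {C : Type*} [Category C] [HasZeroObject C] {n : ℕ} (D : Fin n ⥤ C)

noncomputable def extendByZeroObj (i : Fin (n + 1)) : C :=
  if h : (i : ℕ) < n then D.obj ⟨i, h⟩ else 0

theorem extendByZeroObj_of_lt {i : Fin (n + 1)} (h : (i : ℕ) < n) :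
    extendByZeroObj D i = D.obj ⟨i, h⟩ :=
  dif_pos h

theorem isZero_extendByZeroObj {i : Fin (n + 1)} (h : ¬ (i : ℕ) < n) :
    IsZero (extendByZeroObj D i) := by
  rw [extendByZeroObj, dif_neg h]
  exact isZero_zero C

variable [HasZeroMorphisms C]

noncomputable def extendByZero : Fin (n + 1) ⥤ C where
  obj := extendByZeroObj D
  map {i j} f := if hj : (j : ℕ) < n then
      eqToHom (extendByZeroObj_of_lt D (Nat.lt_of_le_of_lt (leOfHom f) hj)) ≫
        D.map (homOfLE (show (⟨i, _⟩ : Fin n) ≤ ⟨j, hj⟩ from leOfHom f)) ≫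
          eqToHom (extendByZeroObj_of_lt D hj).symm
    else 0
  map_id i := by
    split_ifs with h
    · simp
    · exact (isZero_extendByZeroObj D h).eq_of_src _ _
  map_comp {i j k} f g := by
    split_ifs with hk hj hj
    · simp only [Category.assoc, eqToHom_trans_assoc, eqToHom_refl, Category.id_comp,
        ← D.map_comp_assoc]
      rfl
    · exact absurd (Nat.lt_of_le_of_lt (leOfHom g) hk) hj
    all_goals simp

theorem isZero_extendByZero_obj_last : IsZero ((extendByZero D).obj (last n)) :=
  isZero_extendByZeroObj D (by simp)

theorem epi_extendByZero_map (hD : ∀ (s t : Fin n) (f : s ⟶ t), Epi (D.map f))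
    {i j : Fin (n + 1)} (f : i ⟶ j) : Epi ((extendByZero D).map f) := by
  dsimp only [extendByZero]
  split_ifs with hj
  · infer_instance
  · exact (isZero_extendByZeroObj D hj).epi _

theorem extendByZero_obj_castSucc (t : Fin n) :
    (extendByZero D).obj ((castSuccFunctor n).obj t) = D.obj t :=
  dif_pos t.isLt

theorem extendByZero_map_castSucc {s t : Fin n} (f : s ⟶ t) :
    (extendByZero D).map ((castSuccFunctor n).map f) =
      eqToHom (extendByZero_obj_castSucc D s) ≫ D.map f ≫
        eqToHom (extendByZero_obj_castSucc D t).symm :=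
  dif_pos t.isLt

noncomputable def castSuccCompExtendByZeroIso : castSuccFunctor n ⋙ extendByZero D ≅ D :=
  NatIso.ofComponents (fun t => eqToIso (extendByZero_obj_castSucc D t)) (fun {s t} f => by
    change (extendByZero D).map ((castSuccFunctor n).map f) ≫
        eqToHom (extendByZero_obj_castSucc D t) =
          eqToHom (extendByZero_obj_castSucc D s) ≫ D.map f
    simp only [extendByZero_map_castSucc, Category.assoc, eqToHom_trans, eqToHom_refl,
      Category.comp_id])

end ExtendByZero

variable {C : Type*} [Category C] [HasZeroMorphisms C] {n : ℕ} {E E' : Fin (n + 1) ⥤ C}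

def natTransOfCastSucc (hE' : IsZero (E'.obj (last n)))
    (φ : castSuccFunctor n ⋙ E ⟶ castSuccFunctor n ⋙ E') : E ⟶ E' where
  app i := lastCases (motive := fun i => E.obj i ⟶ E'.obj i) 0 φ.app i
  naturality {i j} f := by
    induction j using lastCases with
    | last => exact hE'.eq_of_tgt _ _
    | cast b =>
      induction i using lastCases with
      | last => exact absurd (leOfHom f) (not_le.2 (castSucc_lt_last b))
      | cast a =>
        have ha : lastCases (motive := fun i => E.obj i ⟶ E'.obj i) 0 φ.app a.castSucc =
            φ.app a := lastCases_castSucc a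
        have hb : lastCases (motive := fun i => E.obj i ⟶ E'.obj i) 0 φ.app b.castSucc =
            φ.app b := lastCases_castSucc b
        rw [ha, hb]
        exact φ.naturality (homOfLE (leOfHom f))

theorem natTransOfCastSucc_app_castSucc (hE' : IsZero (E'.obj (last n)))
    (φ : castSuccFunctor n ⋙ E ⟶ castSuccFunctor n ⋙ E') (t : Fin n) :
    (natTransOfCastSucc hE' φ).app t.castSucc = φ.app t :=
  lastCases_castSucc (motive := fun i => E.obj i ⟶ E'.obj i) t

end Fin

noncomputable def botMonoCompKernelDiagramIso {C : Type*} [Category C] [HasZeroMorphisms C]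
    [HasKernels C] {n : ℕ} (E : Fin (n + 1) ⥤ C) (hE : IsZero (E.obj (Fin.last n))) :
    (botMono n).monotone.functor ⋙ kernelDiagram E ≅ Fin.castSuccFunctor n ⋙ E :=
  NatIso.ofComponents
    (fun t => have : IsIso (kernel.ι (E.map (homOfLE (botMono n t).2))) :=
        kernel.ι_of_zero (hE.eq_of_tgt _ _)
      (asIso (kernel.ι (E.map (homOfLE (botMono n t).2))) :))
    (fun f => kernelDiagram_map_ι E ((botMono n).monotone.functor.map f))

section BotRow

variable {A : Type*} [Category A] [Abelian A] {n : ℕ}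

instance : (botRow A n).Faithful where
  map_injective {_ G} α β h := ObjectProperty.hom_ext _ (G.2.natTrans_ext fun i => by
    induction i using Fin.lastCases with
    | last => exact (G.2.1 _).eq_of_tgt _ _
    | cast t => exact NatTrans.congr_app h t)

instance : (botRow A n).Full where
  map_surjective {F G} φ := by
    let ψ := Fin.natTransOfCastSucc (E := ArPos.botFunctor n ⋙ F.obj)
      (E' := ArPos.botFunctor n ⋙ G.obj) (G.2.1 _) φ
    have hψ (i j : Fin (n + 1)) (h : i ≤ j) :
        F.obj.map (ArPos.botHom h) ≫ ψ.app j = ψ.app i ≫ G.obj.map (ArPos.botHom h) :=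
      ψ.naturality (homOfLE h)
    refine ⟨ObjectProperty.homMk (F.2.natTransOfBot G.2 ψ.app hψ), ?_⟩
    ext t
    exact (F.2.natTransOfBot_app_bot G.2 ψ.app hψ t.castSucc).trans
      (Fin.natTransOfCastSucc_app_castSucc (E := ArPos.botFunctor n ⋙ F.obj)
        (E' := ArPos.botFunctor n ⋙ G.obj) (G.2.1 _) φ t)

theorem epi_map_of_mem_essImage_botRow {D : Fin n ⥤ A} (hD : (botRow A n).essImage D)
    {s t : Fin n} (f : s ⟶ t) : Epi (D.map f) := by
  obtain ⟨G, ⟨e⟩⟩ := hD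
  have : Epi (((botRow A n).obj G).map f) := G.2.epi_map_botHom (leOfHom f)
  rw [← NatIso.naturality_1 e f]
  infer_instance

theorem mem_essImage_botRow {D : Fin n ⥤ A}
    (hD : ∀ (s t : Fin n) (f : s ⟶ t), Epi (D.map f)) :
    (botRow A n).essImage D :=
  ⟨⟨kernelDiagram (Fin.extendByZero D),
      wCond_kernelDiagram _ fun _ _ => Fin.epi_extendByZero_map D hD⟩,
    ⟨botMonoCompKernelDiagramIso _ (Fin.isZero_extendByZero_obj_last D) ≪≫
      Fin.castSuccCompExtendByZeroIso D⟩⟩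

end BotRow

theorem statement10_general (A : Type*) [Category A] [Abelian A] (n : ℕ) :
    (botRow A n).Full ∧ (botRow A n).Faithful ∧
    (∀ D : Fin n ⥤ A,
      (botRow A n).essImage D ↔ ∀ (s t : Fin n) (f : s ⟶ t), Epi (D.map f)) :=
  ⟨inferInstance, inferInstance, fun _ =>
    ⟨fun hD _ _ => epi_map_of_mem_essImage_botRow hD, mem_essImage_botRow⟩⟩

/-- For an abelian category `A` and `n ≥ 1`, the functor
`W_n(A) → Fun([n-1], A)`, `F ↦ (F(0,n) → ⋯ → F(n-1,n))`, is fully faithful with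
essential image the functors `[n-1] → A` all of whose arrows are epimorphisms. -/
theorem statement10 (A : Type*) [Category A] [Abelian A] (n : ℕ) (hn : 1 ≤ n) :
    (botRow A n).Full ∧ (botRow A n).Faithful ∧
    (∀ D : Fin n ⥤ A,
      (botRow A n).essImage D ↔ ∀ (s t : Fin n) (f : s ⟶ t), Epi (D.map f)) :=
  statement10_general A n
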